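/- (Laguerre-domain causality of the delay.) Let 0 < p < 1, τ ≥ 1, m ≥ 1, let u : ℕ → ℝ be square-summable with Laguerre spectrum satisfying u_k = 0 for all k < m, and define y(t) = u(t−τ) for t ≥ τ, y(t) = 0 for t < τ. Then the Laguerre spectrum of y satisfies y_j = 0 for all j < m and y_m = (√p)^τ·u_m. -/

import Mathlib

/-!
By the recursion, shifting `ℓ_j` one step ahead gives `√p • ℓ_j` plus a combination of
`ℓ_0, …, ℓ_{j-1}`; iterating, its `τ`-step shift is `(√p)^τ • ℓ_j` modulo the span of the lower
Laguerre functions. The `y`-coefficient of `ℓ_j` is the `u`-coefficient of this `τ`-step shift,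
and `u` is orthogonal to the lower span when `j ≤ m`. All series converge because each `ℓ_j`
decays geometrically at any rate `r > √p`.
-/
/-- The discrete Laguerre functions `ℓ_j(t; p)` in time-domain. -/
noncomputable def discreteLaguerre (p : ℝ) : ℕ → ℕ → ℝ
  | 0, t => Real.sqrt (1 - p) * Real.sqrt p ^ t
  | j + 1, 0 => -Real.sqrt p * discreteLaguerre p j 0
  | j + 1, t + 1 =>
      Real.sqrt p * discreteLaguerre p (j + 1) t + discreteLaguerre p j t
        - Real.sqrt p * discreteLaguerre p j (t + 1)
  termination_by j t => (j, t)

open Real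

lemma discreteLaguerre_zero (p : ℝ) (t : ℕ) :
    discreteLaguerre p 0 t = √(1 - p) * √p ^ t := by
  rw [discreteLaguerre]

lemma discreteLaguerre_succ_succ (p : ℝ) (j t : ℕ) :
    discreteLaguerre p (j + 1) (t + 1) =
      √p * discreteLaguerre p (j + 1) t + discreteLaguerre p j t
        - √p * discreteLaguerre p j (t + 1) := by
  conv_lhs => rw [discreteLaguerre]

lemma exists_abs_le_mul_pow_of_eq_mul_add {q r C : ℝ} (hq : 0 ≤ q) (hqr : q < r)
    {x g : ℕ → ℝ} (hx : ∀ t, x (t + 1) = q * x t + g t) (hg : ∀ t, |g t| ≤ C * r ^ t) :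
    ∃ D, ∀ t, |x t| ≤ D * r ^ t := by
  set D := max |x 0| (C / (r - q))
  have hCD : C ≤ D * (r - q) := (div_le_iff₀ (sub_pos.2 hqr)).1 (le_max_right _ _)
  refine ⟨D, fun t => ?_⟩
  induction t with
  | zero => simp [D]
  | succ t ih =>
    have hrt : 0 ≤ r ^ t := pow_nonneg (hq.trans hqr.le) t
    calc |x (t + 1)| ≤ q * |x t| + |g t| := by
          rw [hx]; exact (abs_add_le _ _).trans_eq (by rw [abs_mul, abs_of_nonneg hq])
      _ ≤ q * (D * r ^ t) + C * r ^ t := by gcongr; exact hg t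
      _ ≤ D * r ^ (t + 1) := by rw [pow_succ]; nlinarith

lemma exists_abs_discreteLaguerre_le (p : ℝ) {r : ℝ} (hr : √p < r) (j : ℕ) :
    ∃ C, ∀ t, |discreteLaguerre p j t| ≤ C * r ^ t := by
  induction j with
  | zero =>
    refine ⟨√(1 - p), fun t => ?_⟩
    rw [discreteLaguerre_zero, abs_of_nonneg (by positivity)]
    gcongr
  | succ j ih =>
    obtain ⟨C, hC⟩ := ih
    refine exists_abs_le_mul_pow_of_eq_mul_add (sqrt_nonneg p) hr
      (g := fun t => discreteLaguerre p j t - √p * discreteLaguerre p j (t + 1))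
      (C := C * (1 + √p * r)) (fun t => by rw [discreteLaguerre_succ_succ]; ring) fun t => ?_
    calc |discreteLaguerre p j t - √p * discreteLaguerre p j (t + 1)|
        ≤ |discreteLaguerre p j t| + √p * |discreteLaguerre p j (t + 1)| := by
          exact (abs_sub _ _).trans_eq (by rw [abs_mul, abs_of_nonneg (sqrt_nonneg p)])
      _ ≤ C * r ^ t + √p * (C * r ^ (t + 1)) := by gcongr <;> exact hC _
      _ = C * (1 + √p * r) * r ^ t := by ring

lemma summable_sq_discreteLaguerre {p : ℝ} (hp : p < 1) (j : ℕ) :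
    Summable fun t => discreteLaguerre p j t ^ 2 := by
  obtain ⟨r, hpr, hr1⟩ := exists_between ((sqrt_lt' one_pos).2 (by simpa using hp))
  obtain ⟨C, hC⟩ := exists_abs_discreteLaguerre_le p hpr j
  have hr0 : 0 ≤ r := (sqrt_nonneg p).trans hpr.le
  refine ((summable_geometric_of_lt_one (sq_nonneg r) (pow_lt_one₀ hr0 hr1 two_ne_zero)).mul_left
    (C ^ 2)).of_nonneg_of_le (fun t => sq_nonneg _) fun t => ?_
  rw [← sq_abs, ← pow_mul, mul_comm 2 t, pow_mul, ← mul_pow]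
  exact pow_le_pow_left₀ (abs_nonneg _) (hC t) 2

lemma summable_mul_of_summable_sq {ι : Type*} {u v : ι → ℝ} (hu : Summable fun i => u i ^ 2)
    (hv : Summable fun i => v i ^ 2) : Summable fun i => u i * v i :=
  Summable.of_norm_bounded (hu.add hv) fun i => by
    rw [norm_mul, Real.norm_eq_abs, Real.norm_eq_abs]
    nlinarith [two_mul_le_add_sq |u i| |v i|, sq_abs (u i), sq_abs (v i),
      abs_nonneg (u i), abs_nonneg (v i)]

noncomputable def lowerLaguerreSpan (p : ℝ) (j : ℕ) : Submodule ℝ (ℕ → ℝ) :=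
  Submodule.span ℝ (discreteLaguerre p '' Set.Iio j)

lemma discreteLaguerre_mem_lowerLaguerreSpan {p : ℝ} {k j : ℕ} (hk : k < j) :
    discreteLaguerre p k ∈ lowerLaguerreSpan p j :=
  Submodule.subset_span ⟨k, hk, rfl⟩

lemma lowerLaguerreSpan_mono (p : ℝ) : Monotone (lowerLaguerreSpan p) :=
  fun _ _ h => Submodule.span_mono (Set.image_mono (Set.Iio_subset_Iio h))

lemma shift_discreteLaguerre_sub_mem (p : ℝ) (j : ℕ) :
    (fun t => discreteLaguerre p j (t + 1)) - √p • discreteLaguerre p j ∈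
      lowerLaguerreSpan p j := by
  induction j with
  | zero =>
    convert zero_mem (lowerLaguerreSpan p 0)
    ext t
    simp only [Pi.sub_apply, Pi.smul_apply, smul_eq_mul, discreteLaguerre_zero, Pi.zero_apply]
    ring
  | succ j ih =>
    have hrec : (fun t => discreteLaguerre p (j + 1) (t + 1)) - √p • discreteLaguerre p (j + 1) =
        (1 - √p ^ 2) • discreteLaguerre p j -
          √p • ((fun t => discreteLaguerre p j (t + 1)) - √p • discreteLaguerre p j) := by
      ext t
      simp only [Pi.sub_apply, Pi.smul_apply, smul_eq_mul, discreteLaguerre_succ_succ]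
      ring
    rw [hrec]
    exact sub_mem (Submodule.smul_mem _ _ (discreteLaguerre_mem_lowerLaguerreSpan j.lt_succ_self))
      (Submodule.smul_mem _ _ (lowerLaguerreSpan_mono p j.le_succ ih))

lemma shift_mem_lowerLaguerreSpan {p : ℝ} {j : ℕ} {s : ℕ → ℝ} (hs : s ∈ lowerLaguerreSpan p j) :
    (fun t => s (t + 1)) ∈ lowerLaguerreSpan p j := by
  induction hs using Submodule.span_induction with
  | mem s hs =>
    obtain ⟨k, hk, rfl⟩ := hs
    rw [← add_sub_cancel (√p • discreteLaguerre p k) (fun t => discreteLaguerre p k (t + 1))]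
    exact add_mem (Submodule.smul_mem _ _ (discreteLaguerre_mem_lowerLaguerreSpan hk))
      (lowerLaguerreSpan_mono p (le_of_lt hk) (shift_discreteLaguerre_sub_mem p k))
  | zero => exact zero_mem _
  | add _ _ _ _ hs ht => exact add_mem hs ht
  | smul a _ _ hs => exact Submodule.smul_mem _ a hs

lemma shift_pow_discreteLaguerre_sub_mem (p : ℝ) (τ j : ℕ) :
    (fun t => discreteLaguerre p j (t + τ)) - √p ^ τ • discreteLaguerre p j ∈
      lowerLaguerreSpan p j := by
  induction τ with
  | zero => simp
  | succ τ ih =>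
    have hsplit :
        (fun t => discreteLaguerre p j (t + (τ + 1))) - √p ^ (τ + 1) • discreteLaguerre p j =
          (fun t => ((fun t => discreteLaguerre p j (t + τ)) - √p ^ τ • discreteLaguerre p j)
            (t + 1)) +
          √p ^ τ • ((fun t => discreteLaguerre p j (t + 1)) - √p • discreteLaguerre p j) := by
      ext t
      simp only [Pi.sub_apply, Pi.smul_apply, Pi.add_apply, smul_eq_mul, add_right_comm t 1 τ,
        add_assoc t τ 1]
      ring
    rw [hsplit]
    exact add_mem (shift_mem_lowerLaguerreSpan ih)
      (Submodule.smul_mem _ _ (shift_discreteLaguerre_sub_mem p j))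

lemma summable_mul_and_tsum_mul_eq_zero_of_mem_span {ι : Type*} {u : ι → ℝ} {s : Set (ι → ℝ)}
    (hsum : ∀ f ∈ s, Summable fun i => u i * f i) (hzero : ∀ f ∈ s, ∑' i, u i * f i = 0)
    {f : ι → ℝ} (hf : f ∈ Submodule.span ℝ s) :
    (Summable fun i => u i * f i) ∧ ∑' i, u i * f i = 0 := by
  induction hf using Submodule.span_induction with
  | mem f hf => exact ⟨hsum f hf, hzero f hf⟩
  | zero => simp
  | add f g _ _ hf hg =>
    simp only [Pi.add_apply, mul_add]
    exact ⟨hf.1.add hg.1, by rw [hf.1.tsum_add hg.1, hf.2, hg.2, add_zero]⟩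
  | smul a f _ hf =>
    simp only [Pi.smul_apply, smul_eq_mul, mul_left_comm _ a]
    exact ⟨hf.1.mul_left a, by rw [tsum_mul_left, hf.2, mul_zero]⟩

lemma tsum_mul_discreteLaguerre_shift {p : ℝ} (hp : p < 1) {u : ℕ → ℝ}
    (hu : Summable fun t => u t ^ 2) {j : ℕ}
    (horth : ∀ k < j, ∑' t, u t * discreteLaguerre p k t = 0) (τ : ℕ) :
    ∑' t, u t * discreteLaguerre p j (t + τ) = √p ^ τ * ∑' t, u t * discreteLaguerre p j t := by
  have hsum (k : ℕ) : Summable fun t => u t * discreteLaguerre p k t :=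
    summable_mul_of_summable_sq hu (summable_sq_discreteLaguerre hp k)
  set r := (fun t => discreteLaguerre p j (t + τ)) - √p ^ τ • discreteLaguerre p j
  obtain ⟨hr_sum, hr_zero⟩ : (Summable fun t => u t * r t) ∧ ∑' t, u t * r t = 0 :=
    summable_mul_and_tsum_mul_eq_zero_of_mem_span (by rintro _ ⟨k, -, rfl⟩; exact hsum k)
      (by rintro _ ⟨k, hk, rfl⟩; exact horth k hk) (shift_pow_discreteLaguerre_sub_mem p τ j)
  have hsplit (t : ℕ) :
      u t * discreteLaguerre p j (t + τ) = √p ^ τ * (u t * discreteLaguerre p j t) + u t * r t := by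
    simp only [r, Pi.sub_apply, Pi.smul_apply, smul_eq_mul]
    ring
  rw [tsum_congr hsplit, ((hsum j).mul_left _).tsum_add hr_sum, tsum_mul_left, hr_zero, add_zero]

lemma tsum_delay_mul {τ : ℕ} {u y f : ℕ → ℝ} (hy : ∀ t, y t = if t < τ then 0 else u (t - τ)) :
    ∑' t, y t * f t = ∑' t, u t * f (t + τ) := by
  have hsupp : Function.support (fun t => y t * f t) ⊆ Set.range (· + τ) := by
    intro t ht
    by_contra hnot
    have hlt : t < τ := by
      by_contra hle
      exact hnot ⟨t - τ, Nat.sub_add_cancel (not_lt.1 hle)⟩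
    exact ht (by simp [hy, hlt])
  rw [← (add_left_injective τ).tsum_eq hsupp]
  simp [hy]

theorem delay_laguerre_causality_general (p : ℝ) (hp1 : p < 1)
    (τ : ℕ) (m : ℕ)
    (u : ℕ → ℝ) (hu : Summable fun t => u t ^ 2)
    (huk : ∀ k : ℕ, k < m → (∑' t : ℕ, u t * discreteLaguerre p k t) = 0)
    (y : ℕ → ℝ) (hy : ∀ t : ℕ, y t = if t < τ then 0 else u (t - τ)) :
    (∀ j : ℕ, j < m → (∑' t : ℕ, y t * discreteLaguerre p j t) = 0) ∧
      (∑' t : ℕ, y t * discreteLaguerre p m t) =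
        Real.sqrt p ^ τ * ∑' t : ℕ, u t * discreteLaguerre p m t := by
  have hcoeff (j : ℕ) (hj : j ≤ m) :
      ∑' t, y t * discreteLaguerre p j t = √p ^ τ * ∑' t, u t * discreteLaguerre p j t := by
    rw [tsum_delay_mul hy]
    exact tsum_mul_discreteLaguerre_shift hp1 hu (fun k hk => huk k (hk.trans_le hj)) τ
  exact ⟨fun j hj => by rw [hcoeff j hj.le, huk j hj, mul_zero], hcoeff m le_rfl⟩

/-- Laguerre-domain "causality" of the delay: if the first `m` Laguerre coefficients
of the input vanish, so do the first `m` Laguerre coefficients of the delayed output,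
and the `m`-th output coefficient equals `(√p)^τ · u_m`. -/
theorem delay_laguerre_causality (p : ℝ) (hp0 : 0 < p) (hp1 : p < 1)
    (τ : ℕ) (hτ : 1 ≤ τ) (m : ℕ) (hm : 1 ≤ m)
    (u : ℕ → ℝ) (hu : Summable fun t => u t ^ 2)
    (huk : ∀ k : ℕ, k < m → (∑' t : ℕ, u t * discreteLaguerre p k t) = 0)
    (y : ℕ → ℝ) (hy : ∀ t : ℕ, y t = if t < τ then 0 else u (t - τ)) :
    (∀ j : ℕ, j < m → (∑' t : ℕ, y t * discreteLaguerre p j t) = 0) ∧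
      (∑' t : ℕ, y t * discreteLaguerre p m t) =
        Real.sqrt p ^ τ * ∑' t : ℕ, u t * discreteLaguerre p m t :=
  delay_laguerre_causality_general p hp1 τ m u hu huk y hy
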